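/- Let E = [−1,1]³ and T > 0. Let J, vⁱ (i=1,2,3), Ãⁱ and q be continuously differentiable on E × [0,T], with each Ãⁱ(ξ,τ) symmetric, set 𝒜ⁱ = Ãⁱ − vⁱ·Id, and assume the geometric conservation law ∂J/∂τ = Σᵢ ∂vⁱ/∂ξⁱ holds on E × [0,T]. If q satisfies the conservative form ∂(Jq)/∂τ + Σᵢ₌₁³ ∂(𝒜ⁱq)/∂ξⁱ = 0 on E × [0,T], then for every τ ∈ [0,T] the energy identity holds: d/dτ ∫_E qᵀq J dξ + ∫_E Σᵢ₌₁³ ∂/∂ξⁱ ( qᵀ 𝒜ⁱ q ) dξ + ∫_E qᵀ (Σᵢ₌₁³ ∂Ãⁱ/∂ξⁱ) q dξ = 0. -/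

import Mathlib

/-!
Dotting the conservative form with `q` gives `J ∂τ(qᵀq)/2 = -qᵀ(∂τJ) q - Σᵢ qᵀ∂ᵢ(𝒜ⁱq)`. Since `Ãⁱ`
is symmetric, `∂ᵢqᵀ 𝒜ⁱ q = qᵀ 𝒜ⁱ ∂ᵢq`, so `2 qᵀ∂ᵢ(𝒜ⁱq) = ∂ᵢ(qᵀ𝒜ⁱq) + qᵀ(∂ᵢ𝒜ⁱ)q`, and
`qᵀ(∂ᵢ𝒜ⁱ)q = qᵀ(∂ᵢÃⁱ)q - (∂ᵢvⁱ) qᵀq`; the geometric conservation law then cancels the `∂τJ`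
terms against the `∂ᵢvⁱ` terms. This is the pointwise energy identity, and since the energy density
is `C¹` on a compact cube, it may be integrated after differentiating under the integral sign.
-/

open Matrix MeasureTheory

section EntrywiseFDeriv

variable {X : Type*} [NormedAddCommGroup X] [NormedSpace ℝ X] {ι κ : Type*} [Fintype κ]
  {p w : X}

noncomputable def entrywiseFDeriv (A : X → Matrix ι κ ℝ) (p w : X) : Matrix ι κ ℝ :=
  Matrix.of fun a b => fderiv ℝ (fun x => A x a b) p w

theorem fderiv_pi_apply {f : X → ι → ℝ} (hf : DifferentiableAt ℝ f p) (a : ι) :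
    fderiv ℝ f p w a = fderiv ℝ (fun x => f x a) p w := by
  rw [fderiv_apply hf a]; rfl

theorem DifferentiableAt.dotProduct {f g : X → κ → ℝ} (hf : DifferentiableAt ℝ f p)
    (hg : DifferentiableAt ℝ g p) : DifferentiableAt ℝ (fun x => f x ⬝ᵥ g x) p :=
  DifferentiableAt.fun_sum fun a _ => (differentiableAt_pi.1 hf a).mul (differentiableAt_pi.1 hg a)

theorem fderiv_dotProduct_apply {f g : X → κ → ℝ} (hf : DifferentiableAt ℝ f p)
    (hg : DifferentiableAt ℝ g p) :
    fderiv ℝ (fun x => f x ⬝ᵥ g x) p w = fderiv ℝ f p w ⬝ᵥ g p + f p ⬝ᵥ fderiv ℝ g p w := by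
  have hfa := differentiableAt_pi.1 hf
  have hga := differentiableAt_pi.1 hg
  simp only [dotProduct]
  rw [fderiv_fun_sum (A := fun a x => f x a * g x a) fun a _ => (hfa a).mul (hga a),
    ← Finset.sum_add_distrib]
  simp only [_root_.sum_apply, fderiv_fun_mul (hfa _) (hga _), _root_.add_apply, _root_.smul_apply,
    smul_eq_mul, fderiv_pi_apply hf, fderiv_pi_apply hg]
  exact Finset.sum_congr rfl fun a _ => by ring

theorem DifferentiableAt.mulVec {A : X → Matrix ι κ ℝ} {g : X → κ → ℝ}
    (hA : ∀ a b, DifferentiableAt ℝ (fun x => A x a b) p) (hg : DifferentiableAt ℝ g p) :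
    DifferentiableAt ℝ (fun x => A x *ᵥ g x) p :=
  differentiableAt_pi.2 fun a => (differentiableAt_pi.2 (hA a)).dotProduct hg

theorem fderiv_mulVec_apply {A : X → Matrix ι κ ℝ} {g : X → κ → ℝ}
    (hA : ∀ a b, DifferentiableAt ℝ (fun x => A x a b) p) (hg : DifferentiableAt ℝ g p) :
    fderiv ℝ (fun x => A x *ᵥ g x) p w = entrywiseFDeriv A p w *ᵥ g p + A p *ᵥ fderiv ℝ g p w := by
  ext a
  rw [fderiv_pi_apply (DifferentiableAt.mulVec hA hg)]
  have hrow : fderiv ℝ (fun x => A x a) p w = fun b => fderiv ℝ (fun x => A x a b) p w :=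
    funext (fderiv_pi_apply (differentiableAt_pi.2 (hA a)))
  have h := fderiv_dotProduct_apply (w := w) (differentiableAt_pi.2 (hA a)) hg
  rw [hrow] at h
  exact h

theorem ContDiff.dotProduct {k : WithTop ℕ∞} {f g : X → κ → ℝ} (hf : ContDiff ℝ k f)
    (hg : ContDiff ℝ k g) : ContDiff ℝ k fun x => f x ⬝ᵥ g x :=
  ContDiff.sum fun a _ => (contDiff_pi.1 hf a).mul (contDiff_pi.1 hg a)

theorem ContDiff.mulVec [Fintype ι] {k : WithTop ℕ∞} {A : X → Matrix ι κ ℝ} {g : X → κ → ℝ}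
    (hA : ∀ a b, ContDiff ℝ k fun x => A x a b) (hg : ContDiff ℝ k g) :
    ContDiff ℝ k fun x => A x *ᵥ g x :=
  contDiff_pi.2 fun a => (contDiff_pi.2 (hA a)).dotProduct hg

end EntrywiseFDeriv

section ParametricIntegral

variable {X G : Type*} [NormedAddCommGroup X] [NormedSpace ℝ X] [MeasurableSpace X]
  [OpensMeasurableSpace X] [NormedAddCommGroup G] [NormedSpace ℝ G] {μ : Measure X}
  [IsFiniteMeasureOnCompacts μ] {K : Set X} {F : X × ℝ → G}

theorem ContDiff.integrableOn_fderiv_slice (hF : ContDiff ℝ 1 F) (hK : IsCompact K) (t : ℝ)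
    (w : X × ℝ) : IntegrableOn (fun ξ => fderiv ℝ F (ξ, t) w) K μ :=
  ((hF.continuous_fderiv_apply one_ne_zero).comp
    (by fun_prop : Continuous fun ξ : X => ((ξ, t), w))).continuousOn.integrableOn_compact hK

theorem hasDerivAt_setIntegral_of_contDiff [CompleteSpace G] (hF : ContDiff ℝ 1 F)
    (hK : IsCompact K) (t : ℝ) :
    HasDerivAt (fun s => ∫ ξ in K, F (ξ, s) ∂μ) (∫ ξ in K, fderiv ℝ F (ξ, t) (0, 1) ∂μ) t := by
  have hslice : ∀ s : ℝ, IntegrableOn (fun ξ => F (ξ, s)) K μ := fun s =>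
    (hF.continuous.comp (by fun_prop)).continuousOn.integrableOn_compact hK
  obtain ⟨M, hM⟩ := (hK.prod (isCompact_closedBall t 1)).exists_bound_of_continuousOn
    ((hF.continuous_fderiv_apply one_ne_zero).comp (by fun_prop :
      Continuous fun p : X × ℝ => (p, ((0 : X), (1 : ℝ))))).continuousOn
  refine (hasDerivAt_integral_of_dominated_loc_of_deriv_le (μ := μ.restrict K)
    (F' := fun s ξ => fderiv ℝ F (ξ, s) (0, 1)) (bound := fun _ => M)
    (Metric.ball_mem_nhds t one_pos) (.of_forall fun s => (hslice s).aestronglyMeasurable)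
    (hslice t) (hF.integrableOn_fderiv_slice hK t (0, 1)).aestronglyMeasurable ?_
    (integrableOn_const hK.measure_ne_top) ?_).2
  · refine (ae_restrict_iff' hK.measurableSet).2 (.of_forall fun ξ hξ s hs => ?_)
    exact hM (ξ, s) ⟨hξ, Metric.ball_subset_closedBall hs⟩
  · refine .of_forall fun ξ s _ => ?_
    exact (hF.differentiable one_ne_zero (ξ, s)).hasFDerivAt.comp_hasDerivAt s
      ((hasDerivAt_const s ξ).prodMk (hasDerivAt_id s))

end ParametricIntegral

theorem Matrix.sub_smul_one_mulVec {n : Type*} [Fintype n] [DecidableEq n] (A : Matrix n n ℝ)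
    (c : ℝ) (x : n → ℝ) : (A - c • 1) *ᵥ x = A *ᵥ x - c • x := by
  rw [sub_mulVec, smul_mulVec, one_mulVec]

theorem Matrix.IsSymm.dotProduct_mulVec_comm {n R : Type*} [Fintype n] [CommSemiring R]
    {A : Matrix n n R} (hA : A.IsSymm) (x y : n → R) : x ⬝ᵥ (A *ᵥ y) = y ⬝ᵥ (A *ᵥ x) := by
  rw [dotProduct_mulVec, ← mulVec_transpose, hA.eq, dotProduct_comm]

/-- `Q, Qt, Qx i, J₀, Jt, V i, Vx i, A i, Ax i` stand for the values at one point of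
`q, ∂τq, ∂ᵢq, J, ∂τJ, vⁱ, ∂ᵢvⁱ, Ãⁱ, ∂ᵢÃⁱ`. -/
theorem energy_density_identity {ι n : Type*} [Fintype ι] [Fintype n] {Q Qt : n → ℝ}
    {Qx : ι → n → ℝ} {J₀ Jt : ℝ} {V Vx : ι → ℝ} {A Ax : ι → Matrix n n ℝ}
    (hsymm : ∀ i, (A i).IsSymm) (hGCL : Jt = ∑ i, Vx i)
    (hPDE : J₀ • Qt + Jt • Q
      + ∑ i, (Ax i *ᵥ Q + A i *ᵥ Qx i - (Vx i • Q + V i • Qx i)) = 0) :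
    (Q ⬝ᵥ Q) * Jt + J₀ * (Qt ⬝ᵥ Q + Q ⬝ᵥ Qt)
      = -∑ i, (Qx i ⬝ᵥ (A i *ᵥ Q - V i • Q)
          + Q ⬝ᵥ (Ax i *ᵥ Q + A i *ᵥ Qx i - (Vx i • Q + V i • Qx i)))
        - ∑ i, Q ⬝ᵥ (Ax i *ᵥ Q) := by
  set F := fun i => Ax i *ᵥ Q + A i *ᵥ Qx i - (Vx i • Q + V i • Qx i) with hF
  have hflux : ∀ i, Qx i ⬝ᵥ (A i *ᵥ Q - V i • Q) + Q ⬝ᵥ F i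
      = 2 * (Q ⬝ᵥ F i) - Q ⬝ᵥ (Ax i *ᵥ Q) + Vx i * (Q ⬝ᵥ Q) := by
    intro i
    simp only [hF, dotProduct_add, dotProduct_sub, dotProduct_smul, smul_eq_mul,
      (hsymm i).dotProduct_mulVec_comm (Qx i), dotProduct_comm (Qx i) Q]
    ring
  have hQ := congrArg (Q ⬝ᵥ ·) hPDE
  simp only [dotProduct_add, dotProduct_smul, dotProduct_sum, dotProduct_zero, smul_eq_mul] at hQ
  rw [Finset.sum_congr rfl fun i _ => hflux i]
  simp only [Finset.sum_add_distrib, Finset.sum_sub_distrib, ← Finset.mul_sum, ← Finset.sum_mul,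
    ← hGCL]
  rw [dotProduct_comm Qt Q]
  linear_combination 2 * hQ

theorem fderiv_energy_density_eq {X : Type*} [NormedAddCommGroup X] [NormedSpace ℝ X]
    {ι n : Type*} [Fintype ι] [Fintype n] [DecidableEq n] {J : X → ℝ} {v : ι → X → ℝ}
    {At 𝒜 : ι → X → Matrix n n ℝ} {q : X → n → ℝ} {p e₀ : X} {e : ι → X}
    (hJ : DifferentiableAt ℝ J p) (hv : ∀ i, DifferentiableAt ℝ (v i) p)
    (hAt : ∀ i a b, DifferentiableAt ℝ (fun x => At i x a b) p) (hq : DifferentiableAt ℝ q p)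
    (hsymm : ∀ i, (At i p).IsSymm) (h𝒜 : ∀ i x, 𝒜 i x = At i x - v i x • 1)
    (hGCL : fderiv ℝ J p e₀ = ∑ i, fderiv ℝ (v i) p (e i))
    (hPDE : fderiv ℝ (fun x => J x • q x) p e₀
      + ∑ i, fderiv ℝ (fun x => 𝒜 i x *ᵥ q x) p (e i) = 0) :
    fderiv ℝ (fun x => (q x ⬝ᵥ q x) * J x) p e₀
      = -(∑ i, fderiv ℝ (fun x => q x ⬝ᵥ (𝒜 i x *ᵥ q x)) p (e i))
        - ∑ i, q p ⬝ᵥ fderiv ℝ (fun x => At i x *ᵥ q p) p (e i) := by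
  have hflux : ∀ i w, fderiv ℝ (fun x => At i x *ᵥ q x - v i x • q x) p w
      = entrywiseFDeriv (At i) p w *ᵥ q p + At i p *ᵥ fderiv ℝ q p w
        - (fderiv ℝ (v i) p w • q p + v i p • fderiv ℝ q p w) := by
    intro i w
    rw [fderiv_fun_sub ((DifferentiableAt.mulVec (hAt i) hq)) ((hv i).fun_smul hq),
      _root_.sub_apply, fderiv_mulVec_apply (hAt i) hq, fderiv_fun_smul (hv i) hq]
    simp [add_comm]
  have hD_energy : fderiv ℝ (fun x => (q x ⬝ᵥ q x) * J x) p e₀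
      = (q p ⬝ᵥ q p) * fderiv ℝ J p e₀
        + J p * (fderiv ℝ q p e₀ ⬝ᵥ q p + q p ⬝ᵥ fderiv ℝ q p e₀) := by
    rw [fderiv_fun_mul (hq.dotProduct hq) hJ, _root_.add_apply, _root_.smul_apply,
      _root_.smul_apply, fderiv_dotProduct_apply hq hq, smul_eq_mul, smul_eq_mul]
  have hD_mass : fderiv ℝ (fun x => J x • q x) p e₀
      = J p • fderiv ℝ q p e₀ + fderiv ℝ J p e₀ • q p := by
    rw [fderiv_fun_smul hJ hq]; rfl
  have hD_density : ∀ i, fderiv ℝ (fun x => q x ⬝ᵥ (At i x *ᵥ q x - v i x • q x)) p (e i)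
      = fderiv ℝ q p (e i) ⬝ᵥ (At i p *ᵥ q p - v i p • q p)
        + q p ⬝ᵥ fderiv ℝ (fun x => At i x *ᵥ q x - v i x • q x) p (e i) := fun i =>
    fderiv_dotProduct_apply hq ((DifferentiableAt.mulVec (hAt i) hq).sub ((hv i).fun_smul hq))
  have hD_source : ∀ i, fderiv ℝ (fun x => At i x *ᵥ q p) p (e i)
      = entrywiseFDeriv (At i) p (e i) *ᵥ q p := by
    intro i
    simp [fderiv_mulVec_apply (hAt i) (differentiableAt_const (q p))]
  simp only [h𝒜, sub_smul_one_mulVec] at hPDE ⊢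
  simp only [hD_mass, hflux] at hPDE
  simp only [hD_energy, hD_density, hflux, hD_source]
  exact energy_density_identity hsymm hGCL hPDE

theorem energy_identity_general
    (m : ℕ) (T : ℝ)
    (E : Set (Fin 3 → ℝ)) (hE : E = Set.Icc (fun _ => (-1 : ℝ)) (fun _ => (1 : ℝ)))
    (J : (Fin 3 → ℝ) × ℝ → ℝ) (hJ : ContDiff ℝ 1 J)
    (v : Fin 3 → ((Fin 3 → ℝ) × ℝ → ℝ)) (hv : ∀ i, ContDiff ℝ 1 (v i))
    (At : Fin 3 → ((Fin 3 → ℝ) × ℝ → Matrix (Fin m) (Fin m) ℝ))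
    (hAt : ∀ i a b, ContDiff ℝ 1 (fun x => At i x a b))
    (hAtsymm : ∀ i, ∀ p ∈ E ×ˢ Set.Icc (0 : ℝ) T, (At i p).IsSymm)
    (q : (Fin 3 → ℝ) × ℝ → (Fin m → ℝ)) (hq : ContDiff ℝ 1 q)
    (𝒜 : Fin 3 → ((Fin 3 → ℝ) × ℝ → Matrix (Fin m) (Fin m) ℝ))
    (h𝒜 : ∀ i x, 𝒜 i x = At i x - v i x • (1 : Matrix (Fin m) (Fin m) ℝ))
    (hGCL : ∀ p ∈ E ×ˢ Set.Icc (0 : ℝ) T,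
      fderiv ℝ J p (0, 1) = ∑ i : Fin 3, fderiv ℝ (v i) p (Pi.single i 1, 0))
    (hPDE : ∀ p ∈ E ×ˢ Set.Icc (0 : ℝ) T,
      fderiv ℝ (fun x => J x • q x) p (0, 1)
        + ∑ i : Fin 3, fderiv ℝ (fun x => 𝒜 i x *ᵥ q x) p (Pi.single i 1, 0) = 0) :
    ∀ τ ∈ Set.Icc (0 : ℝ) T,
      HasDerivAt (fun t => ∫ ξ in E, (q (ξ, t) ⬝ᵥ q (ξ, t)) * J (ξ, t))
        (-(∫ ξ in E, ∑ i : Fin 3,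
              fderiv ℝ (fun x => q x ⬝ᵥ (𝒜 i x *ᵥ q x)) (ξ, τ) (Pi.single i 1, 0))
          - ∫ ξ in E, ∑ i : Fin 3,
              q (ξ, τ) ⬝ᵥ fderiv ℝ (fun x => At i x *ᵥ q (ξ, τ)) (ξ, τ) (Pi.single i 1, 0)) τ := by
  intro τ hτ
  have hE_compact : IsCompact E := hE ▸ isCompact_Icc
  have hpt : ∀ ξ ∈ E, fderiv ℝ (fun x => (q x ⬝ᵥ q x) * J x) (ξ, τ) (0, 1)
      = -(∑ i : Fin 3, fderiv ℝ (fun x => q x ⬝ᵥ (𝒜 i x *ᵥ q x)) (ξ, τ) (Pi.single i 1, 0))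
        - ∑ i : Fin 3,
          q (ξ, τ) ⬝ᵥ fderiv ℝ (fun x => At i x *ᵥ q (ξ, τ)) (ξ, τ) (Pi.single i 1, 0) :=
    fun ξ hξ => fderiv_energy_density_eq (hJ.differentiable one_ne_zero _)
      (fun i => (hv i).differentiable one_ne_zero _)
      (fun i a b => (hAt i a b).differentiable one_ne_zero _) (hq.differentiable one_ne_zero _)
      (fun i => hAtsymm i _ ⟨hξ, hτ⟩) h𝒜 (hGCL _ ⟨hξ, hτ⟩) (hPDE _ ⟨hξ, hτ⟩)
  have hflux_int : IntegrableOn (fun ξ => ∑ i : Fin 3,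
      fderiv ℝ (fun x => q x ⬝ᵥ (𝒜 i x *ᵥ q x)) (ξ, τ) (Pi.single i 1, 0)) E := by
    refine integrable_finsetSum _ fun i _ => ContDiff.integrableOn_fderiv_slice ?_ hE_compact τ _
    simp only [h𝒜, sub_smul_one_mulVec]
    exact hq.dotProduct ((ContDiff.mulVec (hAt i) hq).sub ((hv i).smul hq))
  have hdensity : ContDiff ℝ 1 fun x => (q x ⬝ᵥ q x) * J x := (hq.dotProduct hq).mul hJ
  have hsource_int : IntegrableOn (fun ξ => ∑ i : Fin 3,
      q (ξ, τ) ⬝ᵥ fderiv ℝ (fun x => At i x *ᵥ q (ξ, τ)) (ξ, τ) (Pi.single i 1, 0)) E :=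
    (hflux_int.fun_neg.fun_sub (hdensity.integrableOn_fderiv_slice hE_compact τ (0, 1))).congr_fun
      (fun ξ hξ => by simp only [hpt ξ hξ]; ring) hE_compact.measurableSet
  have h := hasDerivAt_setIntegral_of_contDiff (μ := volume) hdensity hE_compact τ
  rwa [setIntegral_congr_fun hE_compact.measurableSet hpt,
    integral_sub hflux_int.fun_neg hsource_int, integral_neg] at h

/-- **Energy identity for the mapped conservation law.** On the reference cube
`E = [−1,1]³` and time interval `[0,T]`, with `𝒜 i = Ã i − v i • Id`, symmetric
`Ã i`, the geometric conservation law and the conservative form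
`∂(Jq)/∂τ + Σ i ∂(𝒜 i q)/∂ξ i = 0` in force, the energy identity
`d/dτ ∫_E qᵀq J dξ + ∫_E Σ i ∂/∂ξ i (qᵀ 𝒜 i q) dξ + ∫_E qᵀ(Σ i ∂Ã i/∂ξ i)q dξ = 0`
holds for every `τ ∈ [0,T]`.  (Functions are taken continuously differentiable
on the ambient space; `∂Ã i/∂ξ i ⋅ q(p)` is written as the derivative of
`x ↦ Ã i x *ᵥ q p` with the argument of `q` frozen.) -/
theorem energy_identity
    (m : ℕ) (hm : 1 ≤ m) (T : ℝ) (hT : 0 < T)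
    (E : Set (Fin 3 → ℝ)) (hE : E = Set.Icc (fun _ => (-1 : ℝ)) (fun _ => (1 : ℝ)))
    (J : (Fin 3 → ℝ) × ℝ → ℝ) (hJ : ContDiff ℝ 1 J)
    (v : Fin 3 → ((Fin 3 → ℝ) × ℝ → ℝ)) (hv : ∀ i, ContDiff ℝ 1 (v i))
    (At : Fin 3 → ((Fin 3 → ℝ) × ℝ → Matrix (Fin m) (Fin m) ℝ))
    (hAt : ∀ i a b, ContDiff ℝ 1 (fun x => At i x a b))
    (hAtsymm : ∀ i, ∀ p ∈ E ×ˢ Set.Icc (0 : ℝ) T, (At i p).IsSymm)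
    (q : (Fin 3 → ℝ) × ℝ → (Fin m → ℝ)) (hq : ContDiff ℝ 1 q)
    (𝒜 : Fin 3 → ((Fin 3 → ℝ) × ℝ → Matrix (Fin m) (Fin m) ℝ))
    (h𝒜 : ∀ i x, 𝒜 i x = At i x - v i x • (1 : Matrix (Fin m) (Fin m) ℝ))
    (hGCL : ∀ p ∈ E ×ˢ Set.Icc (0 : ℝ) T,
      fderiv ℝ J p (0, 1) = ∑ i : Fin 3, fderiv ℝ (v i) p (Pi.single i 1, 0))
    (hPDE : ∀ p ∈ E ×ˢ Set.Icc (0 : ℝ) T,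
      fderiv ℝ (fun x => J x • q x) p (0, 1)
        + ∑ i : Fin 3, fderiv ℝ (fun x => 𝒜 i x *ᵥ q x) p (Pi.single i 1, 0) = 0) :
    ∀ τ ∈ Set.Icc (0 : ℝ) T,
      HasDerivAt (fun t => ∫ ξ in E, (q (ξ, t) ⬝ᵥ q (ξ, t)) * J (ξ, t))
        (-(∫ ξ in E, ∑ i : Fin 3,
              fderiv ℝ (fun x => q x ⬝ᵥ (𝒜 i x *ᵥ q x)) (ξ, τ) (Pi.single i 1, 0))
          - ∫ ξ in E, ∑ i : Fin 3,
              q (ξ, τ) ⬝ᵥ fderiv ℝ (fun x => At i x *ᵥ q (ξ, τ)) (ξ, τ) (Pi.single i 1, 0)) τ :=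
  energy_identity_general m T E hE J hJ v hv At hAt hAtsymm q hq 𝒜 h𝒜 hGCL hPDE
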